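/- arXiv:2604.26320 — 3 statements merged into one kernel-verified Lean document; each statement's English description precedes it below -/
import Mathlib

section
/- Let $G = \mathbb{F}_p^n$ and $\mathbb{Z}[G]$ its integral group ring. For any nonzero $w \in G$, the annihilator (kernel of multiplication) of $(1 - g^w)^2$ in $\mathbb{Z}[G]$ equals the annihilator of $(1 - g^w)$: that is, for $x \in \mathbb{Z}[G]$, $x \cdot (1-g^w)^2 = 0$ if and only if $x \cdot (1-g^w) = 0$. -/
/-- In ℤ[G], G = 𝔽_p^n, for nonzero w, the annihilator of (1-gʷ)² equals that of (1-gʷ). -/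
theorem stmt_1 {p n : ℕ} [Fact p.Prime] (w : Fin n → ZMod p) (hw : w ≠ 0)
    (x : AddMonoidAlgebra ℤ (Fin n → ZMod p)) :
    x * (1 - AddMonoidAlgebra.single w 1) ^ 2 = 0 ↔ x * (1 - AddMonoidAlgebra.single w 1) = 0 := by
  set a : AddMonoidAlgebra ℤ (Fin n → ZMod p) := AddMonoidAlgebra.single w 1 with ha_def
  constructor
  · intro h
    have ha : a ^ p = 1 := by
      rw [ha_def, AddMonoidAlgebra.single_pow, one_pow]
      have hpw : p • w = 0 := by
        funext i
        simp [nsmul_eq_mul, ZMod.natCast_self]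
      rw [hpw]
      rfl
    set y := x * (1 - a) with hy_def
    have h2 : y * (1 - a) = 0 := by
      rw [hy_def, mul_assoc, ← sq]; exact h
    have hya : y * a = y := by
      have h3 : y - y * a = 0 := by rw [← mul_one_sub]; exact h2
      exact (sub_eq_zero.mp h3).symm
    have hyk : ∀ k : ℕ, y * a ^ k = y := by
      intro k
      induction k with
      | zero => simp
      | succ k ih => rw [pow_succ, ← mul_assoc, ih, hya]
    have hsum : y * (∑ k ∈ Finset.range p, a ^ k) = p • y := by
      rw [Finset.mul_sum]
      simp [hyk]
    have hzero : y * (∑ k ∈ Finset.range p, a ^ k) = 0 := by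
      rw [hy_def, mul_assoc]
      have h1 := geom_sum_mul a p
      have hgs : (1 - a) * (∑ k ∈ Finset.range p, a ^ k) = 1 - a ^ p := by
        calc (1 - a) * (∑ k ∈ Finset.range p, a ^ k)
            = -((∑ k ∈ Finset.range p, a ^ k) * (a - 1)) := by ring
          _ = -(a ^ p - 1) := by rw [h1]
          _ = 1 - a ^ p := by ring
      rw [hgs, ha, sub_self, mul_zero]
    have hpy : p • y = 0 := by rw [← hsum, hzero]
    have hp : (p : ℤ) ≠ 0 := by
      exact_mod_cast (Fact.out : p.Prime).ne_zero
    ext g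
    have hg : (p • y).coeff g = (0 : AddMonoidAlgebra ℤ (Fin n → ZMod p)).coeff g := by rw [hpy]
    rw [AddMonoidAlgebra.coeff_smul_apply] at hg
    have hmul : (p : ℤ) * y.coeff g = 0 := by
      rw [← nsmul_eq_mul]; simpa using hg
    simpa [hp, (Fact.out : p.Prime).ne_zero] using mul_eq_zero.mp hmul
  · intro h
    rw [sq, ← mul_assoc, h, zero_mul]
end

section
/- Let $p$ be a prime, $G = \mathbb{F}_p^n$, and $M$ an invertible $n \times n$ matrix over $\mathbb{F}_p$ with rows $a_1, \dots, a_n$. Suppose that for every $i \in [n]$ the identity $\sum_{k=1}^n a_{k,i} \, g^{a_k} \prod_{j=1}^n (1 - g^{e_j}) \prod_{j \neq k} (1 - g^{a_j}) = 0$ holds in $\mathbb{F}_p[G]$. Then for every $k \in [n]$, $\prod_{j=1}^n (1 - g^{e_j}) \cdot \prod_{j \neq k} (1 - g^{a_j}) = 0$ in $\mathbb{F}_p[G]$. -/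
set_option maxHeartbeats 1000000

private lemma lin_aux {p n : ℕ} (M : Matrix (Fin n) (Fin n) (ZMod p)) (hM : IsUnit M.det)
    (y : Fin n → AddMonoidAlgebra (ZMod p) (Fin n → ZMod p))
    (h : ∀ i, ∑ k, M k i • y k = 0) (k : Fin n) : y k = 0 := by
  have h1 : ∑ i, M⁻¹ i k • (∑ k', M k' i • y k') = y k := by
    simp_rw [Finset.smul_sum, smul_smul]
    rw [Finset.sum_comm]
    calc ∑ k', ∑ i, (M⁻¹ i k * M k' i) • y k'
        = ∑ k', ((M * M⁻¹) k' k) • y k' := by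
          refine Finset.sum_congr rfl fun k' _ => ?_
          rw [Matrix.mul_apply, Finset.sum_smul]
          exact Finset.sum_congr rfl fun i _ => by rw [mul_comm]
      _ = ∑ k', ((1 : Matrix (Fin n) (Fin n) (ZMod p)) k' k) • y k' := by
          rw [Matrix.mul_nonsing_inv M hM]
      _ = y k := by
          simp [Matrix.one_apply]
  rw [← h1]
  simp [h]

/-- For invertible M with rows a₁,…,aₙ, if for every i
∑ₖ a_{k,i} g^{aₖ} ∏ⱼ(1-g^{eⱼ}) ∏_{j≠k}(1-g^{aⱼ}) = 0 in 𝔽_p[G], then each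
∏ⱼ(1-g^{eⱼ}) ∏_{j≠k}(1-g^{aⱼ}) = 0. -/
theorem stmt_9 {p n : ℕ} [Fact p.Prime] (M : Matrix (Fin n) (Fin n) (ZMod p))
    (hM : IsUnit M.det)
    (h : ∀ i : Fin n,
      ∑ k : Fin n, (M k i) •
        (AddMonoidAlgebra.single (M k) (1 : ZMod p) *
          ((∏ j : Fin n, (1 - AddMonoidAlgebra.single (Pi.single j (1 : ZMod p)) 1)) *
            ∏ j ∈ Finset.univ.erase k, (1 - AddMonoidAlgebra.single (M j) (1 : ZMod p)))) = 0) :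
    ∀ k : Fin n,
      (∏ j : Fin n, ((1 : AddMonoidAlgebra (ZMod p) (Fin n → ZMod p))
          - AddMonoidAlgebra.single (Pi.single j (1 : ZMod p)) 1)) *
        ∏ j ∈ Finset.univ.erase k, (1 - AddMonoidAlgebra.single (M j) (1 : ZMod p)) = 0 := by
  classical
  intro k
  have hz := lin_aux M hM _ h k
  have hu : AddMonoidAlgebra.single (-(M k)) (1 : ZMod p) *
      AddMonoidAlgebra.single (M k) (1 : ZMod p) = 1 := by
    rw [AddMonoidAlgebra.single_mul_single, one_mul, neg_add_cancel]
    exact AddMonoidAlgebra.one_def.symm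
  calc (∏ j : Fin n, ((1 : AddMonoidAlgebra (ZMod p) (Fin n → ZMod p))
          - AddMonoidAlgebra.single (Pi.single j (1 : ZMod p)) 1)) *
        ∏ j ∈ Finset.univ.erase k, (1 - AddMonoidAlgebra.single (M j) (1 : ZMod p))
      = AddMonoidAlgebra.single (-(M k)) (1 : ZMod p) *
        (AddMonoidAlgebra.single (M k) (1 : ZMod p) *
          ((∏ j : Fin n, (1 - AddMonoidAlgebra.single (Pi.single j (1 : ZMod p)) 1)) *
            ∏ j ∈ Finset.univ.erase k, (1 - AddMonoidAlgebra.single (M j) (1 : ZMod p)))) := by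
        rw [← mul_assoc, hu, one_mul]
    _ = 0 := by rw [hz, mul_zero]
end

section
/- Let $p$ be a prime, $G = \mathbb{F}_p^n$, and fix $i \in [n]$ and a family of elements $y_1, \dots, y_n \in \mathbb{F}_p[G]$ and vectors $a'_1, \dots, a'_n$ in the subgroup $G' = \langle e_j : j \neq i \rangle$. Then the expansion of $\prod_{j=1}^n (1 - g^{e_j}) \cdot \prod_{j=1}^n \big((1 - g^{a'_j}) + (1 - g^{e_i}) y_j\big)$ as a polynomial $\sum_{k} b_k (1 - g^{e_i})^k$ with $b_k \in \mathbb{F}_p[G']$ has linear coefficient $b_1 = \prod_{j \neq i} (1 - g^{e_j}) \cdot \prod_{j=1}^n (1 - g^{a'_j})$. -/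
open AddMonoidAlgebra Finset

variable {p n : ℕ} [hp : Fact p.Prime]

private lemma charP_R : CharP (AddMonoidAlgebra (ZMod p) (Fin n → ZMod p)) p :=
  charP_of_injective_algebraMap (R := ZMod p)
    (fun a b hab => AddMonoidAlgebra.single_right_injective (m := (0 : Fin n → ZMod p))
      (by simpa [AddMonoidAlgebra.coe_algebraMap] using hab)) p

private lemma choose_cast (k : ℕ) (hk : k < p) :
    (((p-1).choose k : ℕ) : ZMod p) = (-1)^k := by
  induction k with
  | zero => simp
  | succ m ih =>
    have hm := ih (by omega)
    have hpd : p ∣ p.choose (m+1) := hp.out.dvd_choose (by omega) (by omega) le_rfl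
    have pascal : (p-1).choose m + (p-1).choose (m+1) = p.choose (m+1) := by
      have h2 := Nat.choose_succ_succ (p-1) m
      have h3 : p - 1 + 1 = p := by have := hp.out.pos; omega
      rw [Nat.succ_eq_add_one, Nat.succ_eq_add_one, h3] at h2
      omega
    have hz : ((p.choose (m+1) : ℕ) : ZMod p) = 0 :=
      (ZMod.natCast_eq_zero_iff _ _).mpr hpd
    have key : (((p-1).choose m : ℕ) : ZMod p) + (((p-1).choose (m+1) : ℕ) : ZMod p) = 0 := by
      rw [← Nat.cast_add, pascal, hz]
    rw [hm] at key
    rw [eq_neg_of_add_eq_zero_right key, pow_succ, mul_neg_one]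

private lemma upow (i : Fin n) (m : ℕ) :
    ((single (Pi.single i (1:ZMod p)) (1:ZMod p)
        : AddMonoidAlgebra (ZMod p) (Fin n → ZMod p)))^m
      = single (Pi.single i (m : ZMod p)) (1:ZMod p) := by
  rw [AddMonoidAlgebra.single_pow, one_pow]
  congr 1
  funext j
  by_cases hj : j = i
  · subst hj; simp [nsmul_eq_mul]
  · simp [Pi.single_apply, hj]

private lemma tpow_pred (i : Fin n) :
    ((1 : AddMonoidAlgebra (ZMod p) (Fin n → ZMod p))
        - single (Pi.single i (1:ZMod p)) 1)^(p-1)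
      = ∑ k ∈ Finset.range p,
          (single (Pi.single i (k : ZMod p)) (1:ZMod p)
            : AddMonoidAlgebra (ZMod p) (Fin n → ZMod p)) := by
  set u : AddMonoidAlgebra (ZMod p) (Fin n → ZMod p) := single (Pi.single i (1:ZMod p)) 1 with hu
  have hp1 : p - 1 + 1 = p := by have := hp.out.pos; omega
  have hadd := add_pow (-u) 1 (p-1)
  rw [hp1] at hadd
  have h1 : (1 - u)^(p-1) = (-u + 1)^(p-1) := by ring_nf
  rw [h1, hadd]
  refine Finset.sum_congr rfl fun m hm => ?_
  have hmp : m < p := Finset.mem_range.mp hm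
  have hc : (((p-1).choose m : ℕ) : AddMonoidAlgebra (ZMod p) (Fin n → ZMod p)) = (-1)^m := by
    calc (((p-1).choose m : ℕ) : AddMonoidAlgebra (ZMod p) (Fin n → ZMod p))
        = algebraMap (ZMod p) _ (((p-1).choose m : ℕ) : ZMod p) := by rw [map_natCast]
      _ = algebraMap (ZMod p) _ ((-1)^m) := by rw [choose_cast m hmp]
      _ = (-1)^m := by rw [map_pow, map_neg, map_one]
  rw [hc, one_pow, mul_one, neg_pow]
  have h2 : ((-1 : AddMonoidAlgebra (ZMod p) (Fin n → ZMod p))^m) * (-1)^m = 1 := by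
    rw [← mul_pow]; norm_num
  calc (-1 : AddMonoidAlgebra (ZMod p) (Fin n → ZMod p))^m * u^m * (-1)^m
      = ((-1)^m * (-1)^m) * u^m := by ring
    _ = u^m := by rw [h2, one_mul]
    _ = _ := upow i m

/-- Key injectivity: multiplication by t^(p-1) is injective on G'-supported elements. -/
private lemma key_inj (i : Fin n) (x : AddMonoidAlgebra (ZMod p) (Fin n → ZMod p))
    (hx : ∀ v ∈ x.coeff.support, v i = 0)
    (hxt : x * ((1 : AddMonoidAlgebra (ZMod p) (Fin n → ZMod p))
        - single (Pi.single i (1:ZMod p)) 1)^(p-1) = 0) : x = 0 := by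
  rw [tpow_pred, Finset.mul_sum] at hxt
  have hcoef : ∀ w : Fin n → ZMod p, w i = 0 → x.coeff w = 0 := by
    intro w hw
    have h1 := Finsupp.ext_iff.mp (congrArg AddMonoidAlgebra.coeff hxt) w
    rw [AddMonoidAlgebra.coeff_sum, Finset.sum_apply'] at h1
    have h2 : ∑ k ∈ Finset.range p, x.coeff (w - Pi.single i (k : ZMod p)) = 0 := by
      simpa [AddMonoidAlgebra.coeff_mul_single_apply, sub_eq_add_neg] using h1
    rw [Finset.sum_eq_single 0] at h2
    · simpa using h2
    · intro k hk hk0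
      by_contra hne
      have hmem : (w - Pi.single i (k : ZMod p)) ∈ x.coeff.support := Finsupp.mem_support_iff.mpr hne
      have hz := hx _ hmem
      have hcast : ((k:ℕ) : ZMod p) = 0 := by
        simpa [Pi.sub_apply, hw] using hz
      rw [ZMod.natCast_eq_zero_iff] at hcast
      have := Nat.le_of_dvd (Nat.pos_of_ne_zero hk0) hcast
      have := Finset.mem_range.mp hk
      omega
    · intro h0
      exact absurd (Finset.mem_range.mpr hp.out.pos) h0
  ext w
  by_cases hw : w i = 0
  · exact hcoef w hw
  · by_contra hne
    exact hw (hx w (Finsupp.mem_support_iff.mpr hne))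

private lemma supp_one (i : Fin n) :
    ∀ v ∈ (1 : AddMonoidAlgebra (ZMod p) (Fin n → ZMod p)).coeff.support, v i = 0 := by
  intro v hv
  rw [AddMonoidAlgebra.one_def] at hv
  have := Finsupp.support_single_subset hv
  simp only [Finset.mem_singleton] at this
  rw [this]; rfl

private lemma supp_mul (i : Fin n) {x y : AddMonoidAlgebra (ZMod p) (Fin n → ZMod p)}
    (hx : ∀ v ∈ x.coeff.support, v i = 0) (hy : ∀ v ∈ y.coeff.support, v i = 0) :
    ∀ v ∈ (x*y).coeff.support, v i = 0 := by
  intro v hv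
  have := AddMonoidAlgebra.support_coeff_mul_subset x y hv
  rw [Finset.mem_add] at this
  obtain ⟨a, ha, c, hc, rfl⟩ := this
  simp [hx a ha, hy c hc]

private lemma supp_factor (i : Fin n) (a : Fin n → ZMod p) (ha : a i = 0) :
    ∀ v ∈ ((1 : AddMonoidAlgebra (ZMod p) (Fin n → ZMod p)) - single a 1).coeff.support, v i = 0 := by
  intro v hv
  rw [AddMonoidAlgebra.coeff_sub] at hv
  have := Finsupp.support_sub hv
  rw [Finset.mem_union] at this
  rcases this with h1 | h2
  · exact supp_one i v h1
  · have := Finsupp.support_single_subset h2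
    simp only [Finset.mem_singleton] at this
    rw [this]; exact ha

private lemma supp_prod (i : Fin n) (s : Finset (Fin n))
    (f : Fin n → AddMonoidAlgebra (ZMod p) (Fin n → ZMod p))
    (hf : ∀ j ∈ s, ∀ v ∈ (f j).coeff.support, v i = 0) :
    ∀ v ∈ (∏ j ∈ s, f j).coeff.support, v i = 0 :=
  Finset.prod_induction f (fun x => ∀ v ∈ x.coeff.support, v i = 0)
    (fun _ _ hx hy => supp_mul i hx hy) (supp_one i) hf

private lemma prod_add_decomp (t : AddMonoidAlgebra (ZMod p) (Fin n → ZMod p))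
    (s : Finset (Fin n)) (f g : Fin n → AddMonoidAlgebra (ZMod p) (Fin n → ZMod p)) :
    ∃ z, ∏ j ∈ s, (f j + t * g j) = (∏ j ∈ s, f j) + t * z := by
  classical
  induction s using Finset.induction with
  | empty => exact ⟨0, by simp⟩
  | @insert a s hj ih =>
    obtain ⟨z, hz⟩ := ih
    refine ⟨g a * (∏ j ∈ s, f j) + f a * z + t * (g a * z), ?_⟩
    rw [Finset.prod_insert hj, Finset.prod_insert hj, hz]
    ring

/-- If ∏ⱼ(1-g^{eⱼ})·∏ⱼ((1-g^{a'ⱼ}) + (1-g^{eᵢ})yⱼ) = ∑_{k<p} b_k (1-g^{eᵢ})^k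
with each a'ⱼ in the hyperplane G' = ⟨eⱼ : j ≠ i⟩ and each b_k supported on G', then the linear
coefficient is b₁ = ∏_{j≠i}(1-g^{eⱼ})·∏ⱼ(1-g^{a'ⱼ}). -/
theorem stmt_15 {p n : ℕ} [Fact p.Prime] (i : Fin n)
    (y : Fin n → AddMonoidAlgebra (ZMod p) (Fin n → ZMod p))
    (a' : Fin n → (Fin n → ZMod p)) (ha' : ∀ j, a' j i = 0)
    (b : Fin p → AddMonoidAlgebra (ZMod p) (Fin n → ZMod p))
    (hb : ∀ k : Fin p, ∀ v ∈ (b k).coeff.support, v i = 0)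
    (h : (∏ j : Fin n, (1 - AddMonoidAlgebra.single (Pi.single j (1 : ZMod p)) 1)) *
          ∏ j : Fin n, ((1 - AddMonoidAlgebra.single (a' j) 1)
            + (1 - AddMonoidAlgebra.single (Pi.single i (1 : ZMod p)) 1) * y j)
        = ∑ k : Fin p, b k * (1 - AddMonoidAlgebra.single (Pi.single i (1 : ZMod p)) 1) ^ (k : ℕ)) :
    b 1 = (∏ j ∈ Finset.univ.erase i,
            ((1 : AddMonoidAlgebra (ZMod p) (Fin n → ZMod p))
              - AddMonoidAlgebra.single (Pi.single j (1 : ZMod p)) 1)) *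
          ∏ j : Fin n, (1 - AddMonoidAlgebra.single (a' j) 1) := by
  classical
  haveI : Fact p.Prime := ‹_›
  haveI := @charP_R p n ‹_›
  have hp2 : 2 ≤ p := (Fact.out : p.Prime).two_le
  set tm : AddMonoidAlgebra (ZMod p) (Fin n → ZMod p) :=
    1 - AddMonoidAlgebra.single (Pi.single i (1 : ZMod p)) 1 with htm
  -- t^p = 0
  have hup : (AddMonoidAlgebra.single (Pi.single i (1 : ZMod p)) 1
      : AddMonoidAlgebra (ZMod p) (Fin n → ZMod p))^p = 1 := by
    rw [upow]
    have : ((p : ℕ) : ZMod p) = 0 := ZMod.natCast_self p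
    rw [this]
    simp [AddMonoidAlgebra.one_def]
  have htp : tm^p = 0 := by
    rw [htm, sub_pow_char, one_pow, hup, sub_self]
  have htge : ∀ m, p ≤ m → tm^m = 0 := by
    intro m hm
    calc tm^m = tm^p * tm^(m-p) := by rw [← pow_add]; congr 1; omega
      _ = 0 := by rw [htp, zero_mul]
  -- decompose first product
  set P : AddMonoidAlgebra (ZMod p) (Fin n → ZMod p) :=
    ∏ j ∈ Finset.univ.erase i, (1 - AddMonoidAlgebra.single (Pi.single j (1 : ZMod p)) 1) with hP
  set Q : AddMonoidAlgebra (ZMod p) (Fin n → ZMod p) :=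
    ∏ j : Fin n, (1 - AddMonoidAlgebra.single (a' j) 1) with hQ
  rw [← Finset.mul_prod_erase Finset.univ _ (Finset.mem_univ i)] at h
  obtain ⟨z, hz⟩ := prod_add_decomp tm Finset.univ (fun j => 1 - AddMonoidAlgebra.single (a' j) 1) y
  rw [hz] at h
  -- h : tm * P * (Q + tm * z) = ∑ k, b k * tm ^ k
  haveI : NeZero p := ⟨(Fact.out : p.Prime).pos.ne'⟩
  have hval1 : ((1 : Fin p) : ℕ) = 1 := by
    rw [Fin.val_one']
    exact Nat.mod_eq_of_lt hp2
  have hval0 : ((0 : Fin p) : ℕ) = 0 := rfl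
  rw [← hQ] at h
  -- h : tm * P * (Q + tm * z) = ∑ k, b k * tm ^ (k : ℕ)
  have e1 : tm * tm^(p-1) = tm^p := by rw [← pow_succ']; congr 1; omega
  have hb0 : b 0 = 0 := by
    have hL : (tm * P * (Q + tm * z)) * tm^(p-1) = 0 := by
      calc (tm * P * (Q + tm * z)) * tm^(p-1)
          = (tm * tm^(p-1)) * (P * (Q + tm*z)) := by ring
        _ = 0 := by rw [e1, htp, zero_mul]
    have hR : (∑ k : Fin p, b k * tm ^ (k:ℕ)) * tm^(p-1) = b 0 * tm^(p-1) := by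
      rw [Finset.sum_mul]
      rw [Finset.sum_eq_single 0]
      · rw [hval0, pow_zero, mul_one]
      · intro k _ hk
        have hkv : (k:ℕ) ≠ 0 := fun hh => hk (Fin.ext (by rw [hh, hval0]))
        rw [mul_assoc, ← pow_add, htge _ (by omega), mul_zero]
      · intro hmem; exact absurd (Finset.mem_univ _) hmem
    have hz0 : b 0 * tm^(p-1) = 0 := by rw [← hR, ← h]; exact hL
    rw [htm] at hz0
    exact key_inj i _ (hb 0) hz0
  have hL2 : (tm * P * (Q + tm * z)) * tm^(p-2) = (P * Q) * tm^(p-1) := by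
    have e1' : tm^(p-1) = tm^1 * tm^(p-2) := by rw [← pow_add]; congr 1; omega
    have e2' : tm^p = tm^2 * tm^(p-2) := by rw [← pow_add]; congr 1; omega
    calc (tm * P * (Q + tm * z)) * tm^(p-2)
        = (P*Q) * (tm^1 * tm^(p-2)) + (P*z) * (tm^2 * tm^(p-2)) := by ring
      _ = (P*Q) * tm^(p-1) + (P*z) * tm^p := by rw [← e1', ← e2']
      _ = (P*Q) * tm^(p-1) := by rw [htp, mul_zero, add_zero]
  have hR2 : (∑ k : Fin p, b k * tm ^ (k:ℕ)) * tm^(p-2) = b 1 * tm^(p-1) := by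
    rw [Finset.sum_mul]
    have h0mem : (0 : Fin p) ∈ (Finset.univ : Finset (Fin p)) := Finset.mem_univ _
    rw [← Finset.add_sum_erase _ _ h0mem]
    have h1mem : (1 : Fin p) ∈ Finset.univ.erase (0 : Fin p) := by
      rw [Finset.mem_erase]
      refine ⟨fun hh => ?_, Finset.mem_univ _⟩
      have := congrArg (Fin.val) hh
      rw [hval1, hval0] at this
      omega
    rw [← Finset.add_sum_erase _ _ h1mem]
    have hrest : ∑ k ∈ (Finset.univ.erase (0:Fin p)).erase 1, b k * tm^(k:ℕ) * tm^(p-2) = 0 := by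
      apply Finset.sum_eq_zero
      intro k hk
      rw [Finset.mem_erase, Finset.mem_erase] at hk
      have hk1 : (k:ℕ) ≠ 1 := fun hh => hk.1 (Fin.ext (by rw [hh, hval1]))
      have hk0 : (k:ℕ) ≠ 0 := fun hh => hk.2.1 (Fin.ext (by rw [hh, hval0]))
      rw [mul_assoc, ← pow_add, htge _ (by omega), mul_zero]
    rw [hrest, add_zero, hb0, zero_mul, zero_mul, zero_add]
    have e1'' : tm * tm^(p-2) = tm^(p-1) := by rw [← pow_succ']; congr 1; omega
    rw [hval1, pow_one, mul_assoc, e1'']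
  have hEq : (P*Q) * tm^(p-1) = b 1 * tm^(p-1) := by
    rw [← hL2, ← hR2, h]
  have hsub : (b 1 - P * Q) * tm^(p-1) = 0 := by
    rw [sub_mul, hEq, sub_self]
  have hsupp : ∀ v ∈ (b 1 - P * Q).coeff.support, v i = 0 := by
    intro v hv
    rw [AddMonoidAlgebra.coeff_sub] at hv
    rcases Finset.mem_union.mp (Finsupp.support_sub hv) with h1 | h2
    · exact hb 1 v h1
    · refine supp_mul i ?_ ?_ v h2
      · rw [hP]
        refine supp_prod i _ _ (fun j hj => supp_factor i _ ?_)
        have hji : j ≠ i := (Finset.mem_erase.mp hj).1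
        rw [Pi.single_apply]
        simp [Ne.symm hji]
      · rw [hQ]
        exact supp_prod i Finset.univ _ (fun j _ => supp_factor i _ (ha' j))
  rw [htm] at hsub
  have hfin := key_inj i _ hsupp hsub
  rw [sub_eq_zero] at hfin
  exact hfin
end
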